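/- arXiv:1610.05020 — 2 statements merged into one kernel-verified Lean document; each statement's English description precedes it below -/
import Mathlib

section
/- Let n ≥ 1 and let B_1, B_2 be n×n complex skew-Hermitian matrices (Bᴴ_r = −B_r). Then 2‖[B_1, B_2]‖² ≤ (‖B_1‖² + ‖B_2‖²)². -/
open Matrix

/-- Squared Frobenius norm of a complex matrix: `Re tr (A Aᴴ)`. -/
noncomputable def frobSq {n : ℕ} (A : Matrix (Fin n) (Fin n) ℂ) : ℝ :=
  ((A * Aᴴ).trace).re

/-- Commutator of matrices. -/
noncomputable def mcomm {n : ℕ} (A B : Matrix (Fin n) (Fin n) ℂ) : Matrix (Fin n) (Fin n) ℂ :=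
  A * B - B * A

lemma frobSq_eq_sum {n : ℕ} (A : Matrix (Fin n) (Fin n) ℂ) :
    frobSq A = ∑ j, ∑ k, Complex.normSq (A j k) := by
  unfold frobSq
  rw [Matrix.trace]
  simp only [Matrix.diag, Matrix.mul_apply, Matrix.conjTranspose_apply]
  rw [Complex.re_sum]
  refine Finset.sum_congr rfl fun j _ => ?_
  rw [Complex.re_sum]
  refine Finset.sum_congr rfl fun k _ => ?_
  rw [Complex.star_def, Complex.mul_conj]
  simp

lemma conj_mul_conj {n : ℕ} (U X Y : Matrix (Fin n) (Fin n) ℂ)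
    (hU2 : U * Uᴴ = 1) :
    (Uᴴ * X * U) * (Uᴴ * Y * U) = Uᴴ * (X * Y) * U := by
  have h1 : (Uᴴ * X * U) * (Uᴴ * Y * U) = Uᴴ * X * (U * Uᴴ) * (Y * U) := by
    noncomm_ring
  rw [h1, hU2, Matrix.mul_one]
  noncomm_ring

lemma frobSq_conj {n : ℕ} (U A : Matrix (Fin n) (Fin n) ℂ)
    (hU2 : U * Uᴴ = 1) : frobSq (Uᴴ * A * U) = frobSq A := by
  unfold frobSq
  have e : (Uᴴ * A * U)ᴴ = Uᴴ * Aᴴ * U := by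
    simp [Matrix.conjTranspose_mul, Matrix.mul_assoc]
  rw [e, conj_mul_conj U A Aᴴ hU2, Matrix.trace_mul_cycle, ← Matrix.mul_assoc, hU2,
    Matrix.one_mul]

lemma mcomm_conj {n : ℕ} (U A B : Matrix (Fin n) (Fin n) ℂ)
    (hU2 : U * Uᴴ = 1) :
    mcomm (Uᴴ * A * U) (Uᴴ * B * U) = Uᴴ * mcomm A B * U := by
  unfold mcomm
  rw [conj_mul_conj U A B hU2, conj_mul_conj U B A hU2]
  noncomm_ring

/-- The key inequality when the first matrix is diagonal with purely imaginary entries. -/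
lemma key_diag {n : ℕ} (t : Fin n → ℝ) (M : Matrix (Fin n) (Fin n) ℂ) :
    2 * frobSq (mcomm (Matrix.diagonal fun k => Complex.I * t k) M)
      ≤ (frobSq (Matrix.diagonal fun k => Complex.I * t k) + frobSq M) ^ 2 := by
  set D : Matrix (Fin n) (Fin n) ℂ := Matrix.diagonal fun k => Complex.I * t k with hD
  set T : ℝ := ∑ k, (t k) ^ 2 with hT
  set S : ℝ := ∑ j, ∑ k, Complex.normSq (M j k) with hS
  have hDfs : frobSq D = T := by
    rw [frobSq_eq_sum, hT]
    refine Finset.sum_congr rfl fun j _ => ?_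
    rw [Finset.sum_eq_single j]
    · simp [hD, Matrix.diagonal_apply_eq, Complex.normSq_mul]
      ring
    · intro k _ hk
      simp [hD, Matrix.diagonal_apply_ne' _ hk]
    · simp
  have hMfs : frobSq M = S := frobSq_eq_sum M
  have hC : frobSq (mcomm D M) = ∑ j, ∑ k, (t j - t k) ^ 2 * Complex.normSq (M j k) := by
    rw [frobSq_eq_sum]
    refine Finset.sum_congr rfl fun j _ => Finset.sum_congr rfl fun k _ => ?_
    have : mcomm D M j k = Complex.I * ((t j : ℂ) - t k) * M j k := by
      simp only [mcomm, Matrix.sub_apply, hD, Matrix.diagonal_mul, Matrix.mul_diagonal]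
      ring
    rw [this]
    simp only [Complex.normSq_mul, Complex.normSq_I, one_mul]
    congr 1
    rw [← Complex.ofReal_sub, Complex.normSq_ofReal]
    ring
  have hTnn : 0 ≤ T := Finset.sum_nonneg fun k _ => sq_nonneg _
  have hSnn : 0 ≤ S :=
    Finset.sum_nonneg fun j _ => Finset.sum_nonneg fun k _ => Complex.normSq_nonneg _
  have hbound : ∑ j, ∑ k, (t j - t k) ^ 2 * Complex.normSq (M j k) ≤ 2 * T * S := by
    rw [hS, Finset.mul_sum]
    refine Finset.sum_le_sum fun j _ => ?_
    rw [Finset.mul_sum]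
    refine Finset.sum_le_sum fun k _ => ?_
    have hm : 0 ≤ Complex.normSq (M j k) := Complex.normSq_nonneg _
    rcases eq_or_ne j k with h | h
    · subst h
      nlinarith [Complex.normSq_nonneg (M j j)]
    · have h1 : (t j) ^ 2 + (t k) ^ 2 ≤ T := by
        calc (t j) ^ 2 + (t k) ^ 2 = ∑ i ∈ ({j, k} : Finset (Fin n)), (t i) ^ 2 :=
              (Finset.sum_pair (f := fun i => t i ^ 2) h).symm
          _ ≤ ∑ i, (t i) ^ 2 := Finset.sum_le_sum_of_subset_of_nonneg
              (Finset.subset_univ _) (fun i _ _ => sq_nonneg _)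
          _ = T := hT.symm
      have h2 : (t j - t k) ^ 2 ≤ 2 * T := by nlinarith [sq_nonneg (t j + t k)]
      exact mul_le_mul_of_nonneg_right h2 hm
  rw [hC, hDfs, hMfs]
  nlinarith [sq_nonneg (T - S)]

theorem ddvv_skewHermitian_two (n : ℕ) (hn : 1 ≤ n)
    (B : Fin 2 → Matrix (Fin n) (Fin n) ℂ) (hB : ∀ r, (B r)ᴴ = -(B r)) :
    2 * frobSq (mcomm (B 0) (B 1)) ≤ (frobSq (B 0) + frobSq (B 1)) ^ 2 := by
  -- I • B 0 is Hermitian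
  have hH : (Complex.I • B 0).IsHermitian := by
    unfold Matrix.IsHermitian
    rw [Matrix.conjTranspose_smul, hB 0]
    simp [Complex.star_def, Complex.conj_I]
  set U : Matrix (Fin n) (Fin n) ℂ := (hH.eigenvectorUnitary : Matrix (Fin n) (Fin n) ℂ)
    with hUdef
  have hU2 : U * Uᴴ = 1 := by
    have := hH.eigenvectorUnitary.2.2
    simpa [hUdef, Matrix.star_eq_conjTranspose] using this
  have hdiag : Uᴴ * (Complex.I • B 0) * U
      = Matrix.diagonal (RCLike.ofReal ∘ hH.eigenvalues) := by
    have := hH.conjStarAlgAut_star_eigenvectorUnitary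
    simpa [hUdef, Matrix.star_eq_conjTranspose] using this
  set t : Fin n → ℝ := fun k => -hH.eigenvalues k with ht
  have hA' : Uᴴ * B 0 * U = Matrix.diagonal fun k => Complex.I * t k := by
    have h0 : Uᴴ * (Complex.I • B 0) * U = Complex.I • (Uᴴ * B 0 * U) := by
      rw [Matrix.mul_smul, Matrix.smul_mul]
    have h1 : Complex.I • (Uᴴ * B 0 * U) = Matrix.diagonal (RCLike.ofReal ∘ hH.eigenvalues) := by
      rw [← h0, hdiag]
    have h2 := congrArg (fun X : Matrix (Fin n) (Fin n) ℂ => (-Complex.I) • X) h1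
    simp only [smul_smul, neg_mul, Complex.I_mul_I, neg_neg, one_smul] at h2
    rw [h2]
    ext j k
    rcases eq_or_ne j k with rfl | h
    · simp only [Matrix.smul_apply, Matrix.diagonal_apply_eq, Function.comp_apply, ht,
        RCLike.ofReal_alg]
      push_cast
      simp [Complex.ext_iff]
    · simp [Matrix.smul_apply, Matrix.diagonal_apply_ne _ h]
  have key := key_diag t (Uᴴ * B 1 * U)
  rw [← hA'] at key
  rw [mcomm_conj U (B 0) (B 1) hU2, frobSq_conj U _ hU2, frobSq_conj U _ hU2,
    frobSq_conj U _ hU2] at key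
  exact key
end

section
/- Let n ≥ 2, m ≥ 3, λ ≥ 0, and let B_1 = diag(H_1, 0), B_2 = diag(H_2, 0), B_3 = diag(H_3, 0) be n×n block-diagonal Hermitian matrices (lower-right (n−2)×(n−2) block zero), and B_r = 0 for 4 ≤ r ≤ m. Then equality holds in the DDVV-type inequality: Σ_{r,s=1}^m ‖[B_r, B_s]‖² = (4/3)(Σ_{r=1}^m ‖B_r‖²)². -/
open Matrix

/-- `H₁ = [[λ,0],[0,-λ]]`. -/
noncomputable def H1 (l : ℝ) : Matrix (Fin 2) (Fin 2) ℂ := !![(l : ℂ), 0; 0, -(l : ℂ)]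

/-- `H₂ = [[0,λ],[λ,0]]`. -/
noncomputable def H2 (l : ℝ) : Matrix (Fin 2) (Fin 2) ℂ := !![0, (l : ℂ); (l : ℂ), 0]

/-- `H₃ = [[0,-λi],[λi,0]]`. -/
noncomputable def H3 (l : ℝ) : Matrix (Fin 2) (Fin 2) ℂ :=
  !![0, -(l : ℂ) * Complex.I; (l : ℂ) * Complex.I, 0]

/-- The block-diagonal `n × n` matrix `diag(M, 0)` with lower-right `(n-2) × (n-2)` zero block. -/
def diagEmbed {n : ℕ} (M : Matrix (Fin 2) (Fin 2) ℂ) : Matrix (Fin n) (Fin n) ℂ :=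
  fun i j => if h : i.val < 2 ∧ j.val < 2 then M ⟨i.val, h.1⟩ ⟨j.val, h.2⟩ else 0

lemma sum_fin_two {n : ℕ} (hn : 2 ≤ n) {M : Type*} [AddCommMonoid M] (f : Fin n → M)
    (h : ∀ i : Fin n, 2 ≤ i.val → f i = 0) :
    ∑ i, f i = f ⟨0, by omega⟩ + f ⟨1, by omega⟩ := by
  classical
  rw [← Finset.sum_subset (Finset.subset_univ {(⟨0, by omega⟩ : Fin n), ⟨1, by omega⟩})]
  · rw [Finset.sum_insert (by simp [Fin.ext_iff]), Finset.sum_singleton]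
  · intro x _ hx
    apply h
    simp only [Finset.mem_insert, Finset.mem_singleton, Fin.ext_iff] at hx
    push_neg at hx
    omega

lemma sum_fin_three {m : ℕ} (hm : 3 ≤ m) {M : Type*} [AddCommMonoid M] (f : Fin m → M)
    (h : ∀ i : Fin m, 3 ≤ i.val → f i = 0) :
    ∑ i, f i = f ⟨0, by omega⟩ + f ⟨1, by omega⟩ + f ⟨2, by omega⟩ := by
  classical
  rw [← Finset.sum_subset (Finset.subset_univ
      {(⟨0, by omega⟩ : Fin m), ⟨1, by omega⟩, ⟨2, by omega⟩})]
  · rw [Finset.sum_insert (by simp [Fin.ext_iff]), Finset.sum_insert (by simp [Fin.ext_iff]),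
      Finset.sum_singleton, add_assoc]
  · intro x _ hx
    apply h
    simp only [Finset.mem_insert, Finset.mem_singleton, Fin.ext_iff] at hx
    push_neg at hx
    omega

lemma diagEmbed_mul {n : ℕ} (hn : 2 ≤ n) (M N : Matrix (Fin 2) (Fin 2) ℂ) :
    diagEmbed (n := n) M * diagEmbed N = diagEmbed (M * N) := by
  ext i j
  rw [Matrix.mul_apply, sum_fin_two hn _ (fun k hk => by
    have : ¬ (k.val < 2 ∧ j.val < 2) := by omega
    simp [diagEmbed, this]
    intros; omega)]
  by_cases h : i.val < 2 ∧ j.val < 2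
  · simp only [diagEmbed, Matrix.mul_apply, Fin.sum_univ_two]
    split_ifs <;> first | rfl | omega | simp_all | (exfalso; omega)
  · simp only [diagEmbed, Matrix.mul_apply, Fin.sum_univ_two]
    split_ifs <;> first | rfl | omega | simp_all | (exfalso; omega)

lemma diagEmbed_conjTranspose {n : ℕ} (M : Matrix (Fin 2) (Fin 2) ℂ) :
    (diagEmbed (n := n) M)ᴴ = diagEmbed Mᴴ := by
  ext i j
  simp only [conjTranspose_apply, diagEmbed]
  split_ifs <;> first | rfl | omega | simp

lemma diagEmbed_sub {n : ℕ} (M N : Matrix (Fin 2) (Fin 2) ℂ) :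
    diagEmbed (n := n) M - diagEmbed N = diagEmbed (M - N) := by
  ext i j
  simp only [Matrix.sub_apply, diagEmbed]
  split_ifs <;> first | rfl | simp

lemma trace_diagEmbed {n : ℕ} (hn : 2 ≤ n) (M : Matrix (Fin 2) (Fin 2) ℂ) :
    (diagEmbed (n := n) M).trace = M.trace := by
  rw [Matrix.trace, sum_fin_two hn _ (fun i hi => by
    simp only [Matrix.diag, diagEmbed]
    rw [dif_neg (by omega)])]
  simp only [Matrix.diag, diagEmbed, Matrix.trace, Fin.sum_univ_two]
  split_ifs <;> first | rfl | omega

lemma frobSq_diagEmbed {n : ℕ} (hn : 2 ≤ n) (M : Matrix (Fin 2) (Fin 2) ℂ) :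
    frobSq (diagEmbed (n := n) M) = frobSq M := by
  rw [frobSq, diagEmbed_conjTranspose, diagEmbed_mul hn, trace_diagEmbed hn, frobSq]

lemma mcomm_diagEmbed {n : ℕ} (hn : 2 ≤ n) (M N : Matrix (Fin 2) (Fin 2) ℂ) :
    mcomm (diagEmbed (n := n) M) (diagEmbed N) = diagEmbed (mcomm M N) := by
  rw [mcomm, diagEmbed_mul hn, diagEmbed_mul hn, diagEmbed_sub, mcomm]

lemma frobSq_zero {n : ℕ} : frobSq (0 : Matrix (Fin n) (Fin n) ℂ) = 0 := by
  simp [frobSq]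

lemma mcomm_zero_left {n : ℕ} (A : Matrix (Fin n) (Fin n) ℂ) : mcomm 0 A = 0 := by
  simp [mcomm]

lemma mcomm_zero_right {n : ℕ} (A : Matrix (Fin n) (Fin n) ℂ) : mcomm A 0 = 0 := by
  simp [mcomm]

lemma mcomm_self {n : ℕ} (A : Matrix (Fin n) (Fin n) ℂ) : mcomm A A = 0 := by
  simp [mcomm]

lemma frobSq_neg {n : ℕ} (A : Matrix (Fin n) (Fin n) ℂ) : frobSq (-A) = frobSq A := by
  simp [frobSq]

lemma mcomm_swap {n : ℕ} (A B : Matrix (Fin n) (Fin n) ℂ) : mcomm B A = -(mcomm A B) := by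
  simp [mcomm]

lemma frobSq_H1 (l : ℝ) : frobSq (H1 l) = 2 * l ^ 2 := by
  simp [frobSq, H1, Matrix.trace_fin_two, Matrix.mul_apply, Fin.sum_univ_two, Matrix.vecMul, dotProduct, Matrix.conjTranspose_apply,
    Complex.ext_iff]
  ring

lemma frobSq_H2 (l : ℝ) : frobSq (H2 l) = 2 * l ^ 2 := by
  simp [frobSq, H2, Matrix.trace_fin_two, Matrix.mul_apply, Fin.sum_univ_two, Matrix.vecMul, dotProduct, Matrix.conjTranspose_apply]
  ring

lemma frobSq_H3 (l : ℝ) : frobSq (H3 l) = 2 * l ^ 2 := by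
  simp [frobSq, H3, Matrix.trace_fin_two, Matrix.mul_apply, Fin.sum_univ_two, Matrix.vecMul, dotProduct, Matrix.conjTranspose_apply,
    Complex.ext_iff]
  ring

lemma frobSq_c12 (l : ℝ) : frobSq (mcomm (H1 l) (H2 l)) = 8 * l ^ 4 := by
  simp [frobSq, mcomm, H1, H2, Matrix.trace_fin_two, Matrix.mul_apply, Fin.sum_univ_two, Matrix.vecMul, dotProduct, Matrix.conjTranspose_apply,
    Matrix.sub_apply, Complex.ext_iff]
  ring

lemma frobSq_c13 (l : ℝ) : frobSq (mcomm (H1 l) (H3 l)) = 8 * l ^ 4 := by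
  simp [frobSq, mcomm, H1, H3, Matrix.trace_fin_two, Matrix.mul_apply, Fin.sum_univ_two, Matrix.vecMul, dotProduct, Matrix.conjTranspose_apply,
    Matrix.sub_apply, Complex.ext_iff]
  ring

lemma frobSq_c23 (l : ℝ) : frobSq (mcomm (H2 l) (H3 l)) = 8 * l ^ 4 := by
  simp [frobSq, mcomm, H2, H3, Matrix.trace_fin_two, Matrix.mul_apply, Fin.sum_univ_two, Matrix.vecMul, dotProduct, Matrix.conjTranspose_apply,
    Matrix.sub_apply, Complex.ext_iff]
  ring

theorem ddvv_equality_case (n m : ℕ) (hn : 2 ≤ n) (hm : 3 ≤ m) (l : ℝ) (hl : 0 ≤ l)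
    (B : Fin m → Matrix (Fin n) (Fin n) ℂ)
    (hB1 : B ⟨0, by omega⟩ = diagEmbed (H1 l))
    (hB2 : B ⟨1, by omega⟩ = diagEmbed (H2 l))
    (hB3 : B ⟨2, by omega⟩ = diagEmbed (H3 l))
    (hB0 : ∀ r : Fin m, 3 ≤ r.val → B r = 0) :
    ∑ r : Fin m, ∑ s : Fin m, frobSq (mcomm (B r) (B s)) =
      (4 / 3) * (∑ r : Fin m, frobSq (B r)) ^ 2 := by
  have hinner : ∀ r : Fin m, ∑ s : Fin m, frobSq (mcomm (B r) (B s)) =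
      frobSq (mcomm (B r) (B ⟨0, by omega⟩)) + frobSq (mcomm (B r) (B ⟨1, by omega⟩)) +
      frobSq (mcomm (B r) (B ⟨2, by omega⟩)) := fun r =>
    sum_fin_three hm _ (fun s hs => by rw [hB0 s hs, mcomm_zero_right, frobSq_zero])
  rw [sum_fin_three hm _ (fun r hr => by
      rw [hinner, hB0 r hr, mcomm_zero_left, mcomm_zero_left, mcomm_zero_left, frobSq_zero]
      ring),
    sum_fin_three hm (fun r => frobSq (B r)) (fun r hr => by simp only [hB0 r hr, frobSq_zero]),
    hinner, hinner, hinner, hB1, hB2, hB3,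
    mcomm_diagEmbed hn, mcomm_diagEmbed hn, mcomm_diagEmbed hn, mcomm_diagEmbed hn,
    mcomm_diagEmbed hn, mcomm_diagEmbed hn, mcomm_diagEmbed hn, mcomm_diagEmbed hn,
    mcomm_diagEmbed hn]
  simp only [frobSq_diagEmbed hn, mcomm_self, frobSq_zero]
  rw [mcomm_swap (H1 l) (H2 l), mcomm_swap (H1 l) (H3 l), mcomm_swap (H2 l) (H3 l),
    frobSq_neg, frobSq_neg, frobSq_neg, frobSq_c12, frobSq_c13, frobSq_c23,
    frobSq_H1, frobSq_H2, frobSq_H3]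
  ring
end
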